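/- (Hand-tying Principle) Let U be a universe of short games (a class closed under taking options, disjunctive sums, and conjugates), let G = {G^L | G^R} ∈ U with at least one left option, and let A ∈ U. Then, under misère play, {G^L ∪ {A} | G^R} ≽_U G, i.e., adding an extra left option never hurts Left. -/

import Mathlib

/-!
Every move Left has in `G + X` is still available in `G' + X`, where `G'` is `G` with extra
left options, while Right's moves are the same in both sums. So, by induction on `X`, whenever
Left wins `G + X` moving first she wins `G' + X`, and whenever Right wins `G' + X` moving first
he wins `G + X`. In misère play a player with no move wins, which is why `G` must have a left
option: otherwise `G + X` could be a win for Left only because she is stuck there.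
-/

namespace SetTheory

universe u

/-- Pre-games, as defined in Mathlib (December 2024); removed from current Mathlib. -/
inductive PGame : Type (u + 1)
  | mk : ∀ α β : Type u, (α → PGame) → (β → PGame) → PGame

namespace PGame

def LeftMoves : PGame → Type u
  | mk l _ _ _ => l

def RightMoves : PGame → Type u
  | mk _ r _ _ => r

def moveLeft : ∀ g : PGame, LeftMoves g → PGame
  | mk _ _ L _ => L

def moveRight : ∀ g : PGame, RightMoves g → PGame
  | mk _ _ _ R => R

inductive IsOption : PGame → PGame → Prop
  | moveLeft {x : PGame} (i : x.LeftMoves) : IsOption (x.moveLeft i) x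
  | moveRight {x : PGame} (i : x.RightMoves) : IsOption (x.moveRight i) x

def Identical : PGame.{u} → PGame.{u} → Prop
  | mk _ _ xL xR, mk _ _ yL yR =>
    Relator.BiTotal (fun i j ↦ Identical (xL i) (yL j)) ∧
      Relator.BiTotal (fun i j ↦ Identical (xR i) (yR j))

instance : Zero PGame :=
  ⟨⟨PEmpty, PEmpty, PEmpty.elim, PEmpty.elim⟩⟩

def star : PGame.{u} :=
  ⟨PUnit, PUnit, fun _ => 0, fun _ => 0⟩

def neg : PGame → PGame
  | ⟨l, r, L, R⟩ => ⟨r, l, fun i => neg (R i), fun i => neg (L i)⟩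

instance : Neg PGame :=
  ⟨neg⟩

noncomputable def add (x y : PGame.{u}) : PGame.{u} := by
  induction x generalizing y with | mk xl xr _ _ IHxl IHxr => _
  induction y with | mk yl yr yL yR IHyl IHyr => _
  have y := mk yl yr yL yR
  refine ⟨xl ⊕ yl, xr ⊕ yr, Sum.rec ?_ ?_, Sum.rec ?_ ?_⟩
  · exact fun i => IHxl i y
  · exact IHyl
  · exact fun i => IHxr i y
  · exact IHyr

noncomputable instance : Add PGame.{u} :=
  ⟨add⟩

open Ordinal in
noncomputable def birthday : PGame.{u} → Ordinal.{u}
  | ⟨_, _, xL, xR⟩ =>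
    max (lsub.{u, u} fun i => birthday (xL i)) (lsub.{u, u} fun i => birthday (xR i))

theorem birthday_moveLeft_lt {x : PGame} (i : x.LeftMoves) :
    (x.moveLeft i).birthday < x.birthday := by
  cases x; rw [birthday]; exact lt_max_of_lt_left (Ordinal.lt_lsub _ i)

theorem birthday_moveRight_lt {x : PGame} (i : x.RightMoves) :
    (x.moveRight i).birthday < x.birthday := by
  cases x; rw [birthday]; exact lt_max_of_lt_right (Ordinal.lt_lsub _ i)

end PGame

end SetTheory

open SetTheory PGame

namespace MisereDicot

def Follower (G' G : PGame) : Prop := Relation.ReflTransGen PGame.IsOption G' G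

def IsShort (G : PGame) : Prop :=
  ∀ G', Follower G' G → Finite G'.LeftMoves ∧ Finite G'.RightMoves

def Dicot (G : PGame) : Prop :=
  ∀ G', Follower G' G → (IsEmpty G'.LeftMoves ↔ IsEmpty G'.RightMoves)

mutual
def LeftWinsFirst (G : PGame) : Prop :=
  IsEmpty G.LeftMoves ∨ ∃ i, ¬ RightWinsFirst (G.moveLeft i)
termination_by G.birthday
decreasing_by exact PGame.birthday_moveLeft_lt i

def RightWinsFirst (G : PGame) : Prop :=
  IsEmpty G.RightMoves ∨ ∃ j, ¬ LeftWinsFirst (G.moveRight j)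
termination_by G.birthday
decreasing_by exact PGame.birthday_moveRight_lt j
end

inductive MOutcome : Type
  | L | N | P | R
deriving DecidableEq

instance : LE MOutcome := ⟨fun a b => a = b ∨ a = .R ∨ b = .L⟩

noncomputable def outcome (G : PGame) : MOutcome := by
  classical
  exact if LeftWinsFirst G then (if RightWinsFirst G then .N else .L)
        else (if RightWinsFirst G then .R else .P)

def Dge (G H : PGame) : Prop :=
  ∀ X : PGame, IsShort X → Dicot X → outcome (H + X) ≤ outcome (G + X)

def Deq (G H : PGame) : Prop :=
  ∀ X : PGame, IsShort X → Dicot X → outcome (G + X) = outcome (H + X)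

def Dgt (G H : PGame) : Prop := Dge G H ∧ ¬ Deq G H

def DInvertible (G : PGame) : Prop :=
  ∃ H : PGame, IsShort H ∧ Dicot H ∧ Deq (G + H) 0

/-- The left option `G^L_i` is reversible through its right option `(G^L_i)^R_j ≼ G`. -/
def LeftReversibleAt (G : PGame) (i : G.LeftMoves) (j : (G.moveLeft i).RightMoves) : Prop :=
  Dge G ((G.moveLeft i).moveRight j)

def RightReversibleAt (G : PGame) (j : G.RightMoves) (i : (G.moveRight j).LeftMoves) : Prop :=
  Dge ((G.moveRight j).moveLeft i) G

/-- `G` has a dominated left option (removable by the Domination theorem). -/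
def LeftDominated (G : PGame) : Prop :=
  ∃ i i' : G.LeftMoves, ¬ (G.moveLeft i).Identical (G.moveLeft i') ∧
    Dge (G.moveLeft i') (G.moveLeft i)

def RightDominated (G : PGame) : Prop :=
  ∃ j j' : G.RightMoves, ¬ (G.moveRight j).Identical (G.moveRight j') ∧
    Dge (G.moveRight j) (G.moveRight j')

/-- `G` has a non-atomic reversible left option (bypassable). -/
def LeftNonAtomicReversible (G : PGame) : Prop :=
  ∃ i j, LeftReversibleAt G i j ∧ Nonempty ((G.moveLeft i).moveRight j).LeftMoves

def RightNonAtomicReversible (G : PGame) : Prop :=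
  ∃ j i, RightReversibleAt G j i ∧ Nonempty ((G.moveRight j).moveLeft i).RightMoves

/-- `G` has an atomic-reversible left option to which the atomic-reversibility
replacement applies nontrivially (i.e. changing the set of options): either some
other left option is a winning first move for Left (so the option is removable),
or the option is not already `*`. -/
def LeftAtomicReducible (G : PGame) : Prop :=
  ∃ i j, LeftReversibleAt G i j ∧ IsEmpty ((G.moveLeft i).moveRight j).LeftMoves ∧
    ((∃ i', ¬ (G.moveLeft i').Identical (G.moveLeft i) ∧ ¬ RightWinsFirst (G.moveLeft i')) ∨
      ¬ (G.moveLeft i).Identical star)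

def RightAtomicReducible (G : PGame) : Prop :=
  ∃ j i, RightReversibleAt G j i ∧ IsEmpty ((G.moveRight j).moveLeft i).RightMoves ∧
    ((∃ j', ¬ (G.moveRight j').Identical (G.moveRight j) ∧ ¬ LeftWinsFirst (G.moveRight j')) ∨
      ¬ (G.moveRight j).Identical star)

/-- The Substitution theorem applies to `G`: `G = {A | C}` with `A` an
atomic-reversible left option and `C` an atomic-reversible right option. -/
def SubstitutionReducible (G : PGame) : Prop :=
  (∀ i i' : G.LeftMoves, (G.moveLeft i).Identical (G.moveLeft i')) ∧
  (∀ j j' : G.RightMoves, (G.moveRight j).Identical (G.moveRight j')) ∧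
  (∃ i j, LeftReversibleAt G i j ∧ IsEmpty ((G.moveLeft i).moveRight j).LeftMoves) ∧
  (∃ j i, RightReversibleAt G j i ∧ IsEmpty ((G.moveRight j).moveLeft i).RightMoves)

/-- `G` is in canonical form: no follower admits any of the misère-dicot
simplifications (domination, non-atomic reversibility, atomic reversibility,
substitution) producing an equivalent game with a different set of options. -/
def CanonicalForm (G : PGame) : Prop :=
  ∀ G', Follower G' G →
    ¬ (LeftDominated G' ∨ RightDominated G' ∨
       LeftNonAtomicReversible G' ∨ RightNonAtomicReversible G' ∨
       LeftAtomicReducible G' ∨ RightAtomicReducible G' ∨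
       SubstitutionReducible G')

/-- The game `*2 = {0, * | 0, *}`. -/
def star2 : PGame :=
  PGame.mk Bool Bool (fun b => cond b star 0) (fun b => cond b star 0)

open Classical in
/-- The adjoint `G°` of `G`. -/
noncomputable def adjoint : PGame → PGame
  | PGame.mk l r L R =>
    if IsEmpty l ∧ IsEmpty r then star
    else if IsEmpty l then PGame.mk r PUnit (fun j => adjoint (R j)) (fun _ => 0)
    else if IsEmpty r then PGame.mk PUnit l (fun _ => 0) (fun i => adjoint (L i))
    else PGame.mk r l (fun j => adjoint (R j)) (fun i => adjoint (L i))

/-- A universe of short games: a class closed under taking options, disjunctive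
sums and conjugates. -/
structure GameUniverse where
  mem : PGame → Prop
  short_mem : ∀ G, mem G → IsShort G
  isOption_mem : ∀ G G', mem G → PGame.IsOption G' G → mem G'
  add_mem : ∀ G H, mem G → mem H → mem (G + H)
  neg_mem : ∀ G, mem G → mem (-G)

/-- `G ≽ H` modulo the universe `U`. -/
def UGe (U : GameUniverse) (G H : PGame) : Prop :=
  ∀ X : PGame, U.mem X → outcome (H + X) ≤ outcome (G + X)

/-- `G = H` modulo the universe `U`. -/
def UEq (U : GameUniverse) (G H : PGame) : Prop :=
  ∀ X : PGame, U.mem X → outcome (G + X) = outcome (H + X)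

/-- `G ≻ H` modulo the universe `U`. -/
def UGt (U : GameUniverse) (G H : PGame) : Prop := UGe U G H ∧ ¬ UEq U G H

/-- `J` is invertible in the universe `U`. -/
def UInvertible (U : GameUniverse) (J : PGame) : Prop :=
  ∃ J' : PGame, U.mem J' ∧ UEq U (J + J') 0

theorem outcome_le_of_winsFirst {G H : PGame}
    (hL : LeftWinsFirst H → LeftWinsFirst G) (hR : RightWinsFirst G → RightWinsFirst H) :
    outcome H ≤ outcome G := by
  unfold outcome
  by_cases hLG : LeftWinsFirst G <;> by_cases hRG : RightWinsFirst G <;>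
    by_cases hLH : LeftWinsFirst H <;> by_cases hRH : RightWinsFirst H <;>
    simp_all [LE.le]

section ExtraLeftOptions

variable {hl gl r : Type} {hL : hl → PGame} {gL : gl → PGame} {R : r → PGame}

theorem winsFirst_add_of_leftOptions_subset [Nonempty hl] (f : hl → gl)
    (hf : ∀ i, gL (f i) = hL i) (X : PGame) :
    (LeftWinsFirst (mk hl r hL R + X) → LeftWinsFirst (mk gl r gL R + X)) ∧
      (RightWinsFirst (mk gl r gL R + X) → RightWinsFirst (mk hl r hL R + X)) := by
  induction X with
  | mk a b XL XR ihL ihR =>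
    constructor
    · rw [LeftWinsFirst, LeftWinsFirst]
      rintro (hstuck | ⟨i | k, hwin⟩)
      · exact (hstuck.false (Sum.inl (Classical.arbitrary hl))).elim
      · refine Or.inr ⟨Sum.inl (f i), ?_⟩
        change ¬ RightWinsFirst (gL (f i) + mk a b XL XR)
        rwa [hf]
      · exact Or.inr ⟨Sum.inr k, fun h => hwin ((ihL k).2 h)⟩
    · rw [RightWinsFirst, RightWinsFirst]
      rintro (hstuck | ⟨j | k, hwin⟩)
      · exact Or.inl hstuck
      · exact Or.inr ⟨Sum.inl j, hwin⟩
      · exact Or.inr ⟨Sum.inr k, fun h => hwin ((ihR k).1 h)⟩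

theorem outcome_add_le_of_leftOptions_subset [Nonempty hl] (f : hl → gl)
    (hf : ∀ i, gL (f i) = hL i) (X : PGame) :
    outcome (mk hl r hL R + X) ≤ outcome (mk gl r gL R + X) :=
  outcome_le_of_winsFirst (winsFirst_add_of_leftOptions_subset f hf X).1
    (winsFirst_add_of_leftOptions_subset f hf X).2

end ExtraLeftOptions

/-- Hand-tying Principle: adding an extra left option `A` to a game
`G` with at least one left option never hurts Left:
`{G^L ∪ {A} | G^R} ≽_U G`. -/
theorem stmt18 (U : GameUniverse) (xl xr : Type) (xL : xl → PGame) (xR : xr → PGame)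
    (A : PGame) (hxl : Nonempty xl) (hG : U.mem (PGame.mk xl xr xL xR)) (hA : U.mem A)
    (hG' : U.mem (PGame.mk (xl ⊕ PUnit) xr (Sum.elim xL (fun _ => A)) xR)) :
    UGe U (PGame.mk (xl ⊕ PUnit) xr (Sum.elim xL (fun _ => A)) xR)
      (PGame.mk xl xr xL xR) :=
  fun X _ => outcome_add_le_of_leftOptions_subset (hL := xL) Sum.inl (fun _ => rfl) X

end MisereDicot
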